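/- arXiv:1403.7938 — 2 statements merged into one kernel-verified Lean document; each statement's English description precedes it below -/
import Mathlib

section
/- Let V be a locally finite variety of arbitrary type F, and let W be a subvariety of V. Then the following are equivalent: (1) there exists no infinite strictly descending chain of varieties V ⊇ V_1 ⊃ V_2 ⊃ V_3 ⊃ ⋯ with W = ⋂_{i∈ℕ} V_i; (2) there is k ∈ ℕ and a set Σ of identities, each containing at most k variables, with W = V ∩ Mod(Σ); (3) there is a finite set Φ of identities with W = V ∩ Mod(Φ). -/
open FirstOrder FirstOrder.Language

universe u v

/-- A bundled algebra for the language `L`: a type together with an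
interpretation of the operation symbols of `L`. -/
structure Alg (L : FirstOrder.Language.{u, v}) : Type (max u v 1) where
  carrier : Type
  [str : L.Structure carrier]

attribute [instance] Alg.str

/-- An identity (equational law): a pair of terms in `n` variables. -/
abbrev Identity (L : FirstOrder.Language) :=
  Σ n : ℕ, L.Term (Fin n) × L.Term (Fin n)

/-- `A` satisfies the identity `e`: the two induced term functions agree. -/
def Alg.Sat {L : FirstOrder.Language} (A : Alg L) (e : Identity L) : Prop :=
  ∀ v : Fin e.1 → A.carrier, e.2.1.realize v = e.2.2.realize v

/-- The class of all models of a set of identities. -/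
def ModClass (L : FirstOrder.Language) (E : Set (Identity L)) : Set (Alg L) :=
  {A | ∀ e ∈ E, A.Sat e}

/-- A variety (equational class): a class of algebras defined by a set of identities. -/
def IsVariety (L : FirstOrder.Language) (V : Set (Alg L)) : Prop :=
  ∃ E : Set (Identity L), V = ModClass L E

/-- `varGen L K` is the smallest variety containing the class `K`:
the models of all identities valid in `K`. -/
def varGen (L : FirstOrder.Language) (K : Set (Alg L)) : Set (Alg L) :=
  ModClass L {e | ∀ B ∈ K, B.Sat e}

/-- `f` is a `k`-edge operation (`k ≥ 2`): a `(k+1)`-ary operation with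
`f(y,y,x,…,x) = f(y,x,y,x,…,x) = x` and `f(x,…,x,y,x,…,x) = x` whenever the
single `y` is in a position `≥ 4` (1-indexed). -/
def IsEdgeOp {A : Type} (k : ℕ) (f : (Fin (k + 1) → A) → A) : Prop :=
  (∀ x y : A, f (fun i => if (i : ℕ) ≤ 1 then y else x) = x) ∧
  (∀ x y : A, f (fun i => if (i : ℕ) = 0 ∨ (i : ℕ) = 2 then y else x) = x) ∧
  (∀ i : Fin (k + 1), 3 ≤ (i : ℕ) → ∀ x y : A,
    f (Function.update (fun _ => x) i y) = x)

/-- An algebra has an edge term if some term induces a `k`-edge operation for some `k ≥ 2`. -/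
def HasEdgeTerm (L : FirstOrder.Language) (A : Type) [L.Structure A] : Prop :=
  ∃ k : ℕ, 2 ≤ k ∧ ∃ t : L.Term (Fin (k + 1)), IsEdgeOp k (fun v : Fin (k + 1) → A => t.realize v)

/-- An algebra is `k`-generated if it is generated by a subset of size at most `k`. -/
def KGen (L : FirstOrder.Language) (k : ℕ) (A : Alg L) : Prop :=
  ∃ S : Set A.carrier, S.Finite ∧ S.ncard ≤ k ∧ Substructure.closure L S = ⊤

/-- An algebra is finitely generated if it is generated by a finite subset. -/
def FinGen (L : FirstOrder.Language) (A : Alg L) : Prop :=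
  ∃ S : Set A.carrier, S.Finite ∧ Substructure.closure L S = ⊤

/-- A class of algebras is locally finite if all of its finitely generated members
are finite. -/
def IsLocallyFinite (L : FirstOrder.Language) (V : Set (Alg L)) : Prop :=
  ∀ A ∈ V, FinGen L A → Finite A.carrier

/-- A finite algebra `B` is cardinality critical if it does not lie in the variety
generated by the algebras in `Var(B)` of size smaller than `B`. -/
def CardCritical (L : FirstOrder.Language) (B : Alg L) : Prop :=
  Finite B.carrier ∧
    B ∉ varGen L {C | C ∈ varGen L {B} ∧ Cardinal.mk C.carrier < Cardinal.mk B.carrier}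

/-- `V` is a subcover of `W`: `V ⊂ W` and no variety lies strictly between them. -/
def IsSubcover (L : FirstOrder.Language) (V W : Set (Alg L)) : Prop :=
  V ⊂ W ∧ ¬ ∃ V' : Set (Alg L), IsVariety L V' ∧ V ⊂ V' ∧ V' ⊂ W

/-! In a locally finite variety `V` the `n`-generated free algebra is finite, so modulo `V` there
are only finitely many `n`-variable terms. Hence a set of identities in at most `k` variables is
equivalent over `V` to a finite subset of it. Along a descending chain of subvarieties of `V` the
`n`-variable theories therefore stabilise, after which every `n`-generated algebra of the chain lies
in its intersection; if the intersection is cut out of `V` by identities in `n` variables, the chain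
is eventually constant. Conversely, if `W` is not cut out by identities in boundedly many variables,
the varieties `V ∩ Mod(Id_{≤n} W)` descend to `W` without ever reaching it. -/

theorem Antitone.exists_strictAnti_comp_iInf_eq {α : Type*} [CompleteLattice α] {C : ℕ → α}
    (hC : Antitone C) (hne : ∀ n, C n ≠ ⨅ i, C i) :
    ∃ φ : ℕ → ℕ, (∀ i, C (φ (i + 1)) < C (φ i)) ∧ ⨅ i, C (φ i) = ⨅ i, C i := by
  have hdrop : ∀ m, ∃ m', m < m' ∧ C m' < C m := by
    intro m
    obtain ⟨j, hj⟩ : ∃ j, ¬ C m ≤ C j := by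
      by_contra! h
      exact hne m (le_antisymm (le_iInf h) (iInf_le C m))
    have hmj : m < j := lt_of_not_ge fun hjm => hj (hC hjm)
    exact ⟨j, hmj, lt_of_le_not_ge (hC hmj.le) hj⟩
  choose next hlt hnext using hdrop
  have hφ : StrictMono fun i => next^[i] 0 := strictMono_nat_of_lt_succ fun i => by
    simpa only [Function.iterate_succ_apply'] using hlt _
  refine ⟨fun i => next^[i] 0, fun i => ?_, hC.iInf_comp_tendsto_atTop hφ.tendsto_atTop⟩
  simpa only [Function.iterate_succ_apply'] using hnext _

theorem Setoid.exists_forall_le_of_monotone {α : Type*} {r : Setoid α} [Finite (Quotient r)]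
    {s : ℕ → Setoid α} (hs : Monotone s) (hr : ∀ j, r ≤ s j) : ∃ i, ∀ j, s j ≤ s i := by
  have : Finite (Setoid (Quotient r)) :=
    Finite.of_injective (fun t : Setoid (Quotient r) => @Setoid.r _ t) fun _ _ h =>
      Setoid.ext fun a b => iff_of_eq (congrFun₂ h a b)
  have : Finite {t // r ≤ t} := Finite.of_equiv _ (Setoid.correspondence r).symm.toEquiv
  obtain ⟨i, hi⟩ := WellFoundedGT.monotone_chain_condition
    ⟨fun j => (⟨s j, hr j⟩ : {t // r ≤ t}), fun _ _ h => hs h⟩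
  refine ⟨i, fun j => (le_total i j).elim (fun hij => ?_) (fun hji => hs hji)⟩
  exact (congrArg Subtype.val (hi j hij)).ge

section

variable {L : FirstOrder.Language.{u, v}}

theorem FirstOrder.Language.Substructure.exists_term_realize_eq_of_mem_closure_range
    {M : Type*} [L.Structure M] {α : Type*} {v : α → M} {x : M}
    (hx : x ∈ Substructure.closure L (Set.range v)) : ∃ t : L.Term α, t.realize v = x := by
  obtain ⟨t, rfl⟩ := Substructure.mem_closure_iff_exists_term.1 hx
  exact ⟨t.relabel (Set.rangeSplitting v), by rw [Term.realize_relabel, Set.comp_rangeSplitting]⟩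

def Identity.widen (e : Identity L) {k : ℕ} (h : e.1 ≤ k) : Identity L :=
  ⟨k, e.2.1.relabel (Fin.castLE h), e.2.2.relabel (Fin.castLE h)⟩

theorem modClass_anti {E E' : Set (Identity L)} (h : E ⊆ E') : ModClass L E' ⊆ ModClass L E :=
  fun _ hA e he => hA e (h he)

namespace Alg

theorem sat_widen_iff {A : Alg L} {e : Identity L} {k : ℕ} (h : e.1 ≤ k) :
    A.Sat (e.widen h) ↔ A.Sat e := by
  refine ⟨fun hA w => ?_, fun hA v => ?_⟩
  · -- `A` may be empty, but not once there is a `w`: `e.2.1.realize w` pads the new variables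
    obtain ⟨v, hvw⟩ : ∃ v : Fin k → A.carrier, v ∘ Fin.castLE h = w :=
      ⟨Function.extend (Fin.castLE h) w fun _ => e.2.1.realize w,
        funext ((Fin.castLE_injective h).extend_apply w _)⟩
    have hv : (e.2.1.relabel (Fin.castLE h)).realize v = (e.2.2.relabel (Fin.castLE h)).realize v :=
      hA v
    rwa [Term.realize_relabel, Term.realize_relabel, hvw] at hv
  · exact Term.realize_relabel.trans ((hA _).trans Term.realize_relabel.symm)

def pi {ι : Type} (A : ι → Alg L) : Alg L where
  carrier := ∀ i, (A i).carrier
  str :=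
    { funMap := fun f xs i => Structure.funMap f fun j => xs j i
      RelMap := fun r xs => ∀ i, Structure.RelMap r fun j => xs j i }

theorem realize_pi {ι : Type} {A : ι → Alg L} {α : Type*} (t : L.Term α)
    (v : α → (pi A).carrier) (i : ι) : t.realize v i = t.realize fun a => v a i := by
  induction t with
  | var a => rfl
  | func f ts ih => exact congrArg (Structure.funMap f) (funext ih)

theorem sat_pi {ι : Type} {A : ι → Alg L} {e : Identity L} (h : ∀ i, (A i).Sat e) :
    (pi A).Sat e := fun v => funext fun i => by
  rw [realize_pi, realize_pi]
  exact h i _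

theorem sat_substructure {A : Alg L} (S : L.Substructure A.carrier) {e : Identity L}
    (h : A.Sat e) : (⟨S⟩ : Alg L).Sat e := fun v => S.subtype.injective <| by
  rw [← HomClass.realize_term, ← HomClass.realize_term]
  exact h _

theorem sat_of_forall_closure_sat {A : Alg L} {e : Identity L}
    (h : ∀ v : Fin e.1 → A.carrier, (⟨Substructure.closure L (Set.range v)⟩ : Alg L).Sat e) :
    A.Sat e := by
  intro v
  have := congrArg (Substructure.closure L (Set.range v)).subtype
    (h v fun i => ⟨v i, Substructure.subset_closure ⟨i, rfl⟩⟩)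
  rwa [← HomClass.realize_term, ← HomClass.realize_term] at this

theorem finGen_iff_fg {A : Alg L} : FinGen L A ↔ Structure.FG L A.carrier := by
  rw [Structure.fg_def, Substructure.fg_def]
  rfl

end Alg

/-- The quotient is the `n`-generated free algebra of the variety generated by `K`. -/
def termSetoid (K : Set (Alg L)) (n : ℕ) : Setoid (L.Term (Fin n)) where
  r p q := ∀ A ∈ K, A.Sat ⟨n, p, q⟩
  iseqv :=
    ⟨fun _ _ _ _ => rfl, fun h A hA v => (h A hA v).symm,
      fun h h' A hA v => (h A hA v).trans (h' A hA v)⟩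

theorem termSetoid_anti {K K' : Set (Alg L)} (h : K ⊆ K') (n : ℕ) :
    termSetoid K' n ≤ termSetoid K n := fun _ _ hpq A hA => hpq A (h hA)

theorem Alg.sat_iff_of_termSetoid {K : Set (Alg L)} {A : Alg L} (hA : A ∈ K) {n : ℕ}
    {p q p' q' : L.Term (Fin n)} (hp : termSetoid K n p p') (hq : termSetoid K n q q') :
    A.Sat ⟨n, p, q⟩ ↔ A.Sat ⟨n, p', q'⟩ :=
  forall_congr' fun v => by rw [hp A hA v, hq A hA v]

theorem exists_finite_subset_inter_modClass_eq {V : Set (Alg L)} {k : ℕ}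
    [Finite (Quotient (termSetoid V k))] {E : Set (Identity L)} (hE : ∀ e ∈ E, e.1 ≤ k) :
    ∃ Φ ⊆ E, Φ.Finite ∧ V ∩ ModClass L Φ = V ∩ ModClass L E := by
  -- identities with the same image under `f` hold in the same members of `V`
  set f : E → Quotient (termSetoid V k) × Quotient (termSetoid V k) := fun e =>
    (⟦(e.1.widen (hE e e.2)).2.1⟧, ⟦(e.1.widen (hE e e.2)).2.2⟧)
  choose g hg using fun y : Set.range f => y.2
  have hΦE : (Set.range fun y => (g y).1) ⊆ E := Set.range_subset_iff.2 fun y => (g y).2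
  refine ⟨_, hΦE, Set.finite_range _, subset_antisymm (fun A hA => ⟨hA.1, fun e he => ?_⟩)
      (Set.inter_subset_inter_right _ (modClass_anti hΦE))⟩
  set y : Set.range f := ⟨f ⟨e, he⟩, ⟨_, rfl⟩⟩
  obtain ⟨hp, hq⟩ := Prod.ext_iff.1 (hg y)
  have hgy := (Alg.sat_widen_iff (hE _ (g y).2)).2 (hA.2 _ ⟨y, rfl⟩)
  exact (Alg.sat_widen_iff (hE e he)).1
    ((Alg.sat_iff_of_termSetoid hA.1 (Quotient.exact hp) (Quotient.exact hq)).1 hgy)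

namespace IsVariety

variable {V W : Set (Alg L)}

theorem inter_modClass (hV : IsVariety L V) (E : Set (Identity L)) :
    IsVariety L (V ∩ ModClass L E) := by
  obtain ⟨EV, rfl⟩ := hV
  refine ⟨EV ∪ E, Set.ext fun A => ?_⟩
  simp only [ModClass, Set.mem_inter_iff, Set.mem_ofPred_eq, Set.mem_union, or_imp, forall_and]

theorem pi_mem (hV : IsVariety L V) {ι : Type} {A : ι → Alg L} (h : ∀ i, A i ∈ V) :
    Alg.pi A ∈ V := by
  obtain ⟨E, rfl⟩ := hV
  exact fun e he => Alg.sat_pi fun i => h i e he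

theorem substructure_mem (hV : IsVariety L V) {A : Alg L} (hA : A ∈ V)
    (S : L.Substructure A.carrier) : (⟨S⟩ : Alg L) ∈ V := by
  obtain ⟨E, rfl⟩ := hV
  exact fun e he => Alg.sat_substructure S (hA e he)

theorem finite_closure (hV : IsVariety L V) (hLF : IsLocallyFinite L V) {A : Alg L} (hA : A ∈ V)
    {s : Set A.carrier} (hs : s.Finite) : (Substructure.closure L s : Set A.carrier).Finite := by
  have := hLF _ (hV.substructure_mem hA _) <| Alg.finGen_iff_fg.2 <|
    (Substructure.fg_iff_structure_fg _).1 (Substructure.fg_closure hs)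
  exact Set.toFinite _

theorem finite_quotient_termSetoid (hV : IsVariety L V) (hLF : IsLocallyFinite L V) (n : ℕ) :
    Finite (Quotient (termSetoid V n)) := by
  by_contra hinf
  rw [not_finite_iff_infinite] at hinf
  obtain ⟨f, hf⟩ := Infinite.natEmbedding (Quotient (termSetoid V n))
  set t : ℕ → L.Term (Fin n) := fun i => (f i).out
  have ht : ∀ {i j}, termSetoid V n (t i) (t j) → i = j := fun h => hf (Quotient.out_equiv_out.1 h)
  have hsep : ∀ ij : {ij : ℕ × ℕ // ij.1 ≠ ij.2}, ∃ A ∈ V, ¬ A.Sat ⟨n, t ij.1.1, t ij.1.2⟩ :=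
    fun ij => by
      by_contra! h
      exact ij.2 (ht h)
  choose A hAV hA using hsep
  simp only [Alg.Sat, not_forall] at hA
  choose x hx using hA
  -- the terms `t i` take pairwise distinct values at one `n`-tuple of the product
  set y : Fin n → (Alg.pi A).carrier := fun k ij => x ij k
  have hfin := hV.finite_closure hLF (hV.pi_mem hAV) (Set.finite_range y)
  refine Set.infinite_range_of_injective (f := fun i => (t i).realize y) (fun i j hij => ?_)
    (hfin.subset ?_)
  · by_contra hne
    apply hx ⟨(i, j), hne⟩
    simpa only [Alg.realize_pi] using congrFun hij ⟨(i, j), hne⟩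
  · rintro _ ⟨i, rfl⟩
    exact Term.realize_mem _ _ fun k => Substructure.subset_closure ⟨k, rfl⟩

/-- Each element of the generated subalgebra is a term in `v`, so substituting these terms turns
each defining identity of `V` into an `n`-variable one. -/
theorem closure_mem_of_termSetoid_le (hV : IsVariety L V) {K : Set (Alg L)} {A : Alg L}
    (hA : A ∈ K) {n : ℕ} (hle : termSetoid V n ≤ termSetoid K n) (v : Fin n → A.carrier) :
    (⟨Substructure.closure L (Set.range v)⟩ : Alg L) ∈ V := by
  obtain ⟨E', rfl⟩ := hV
  intro e he w
  choose u hu using fun i => Substructure.exists_term_realize_eq_of_mem_closure_range (w i).2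
  have hinst : termSetoid (ModClass L E') n (e.2.1.subst u) (e.2.2.subst u) := fun B hB x => by
    simpa only [Term.realize_subst] using hB e he _
  refine Subtype.val_injective ?_
  have hw : (Substructure.closure L (Set.range v)).subtype ∘ w = fun i => (u i).realize v :=
    funext fun i => (hu i).symm
  have h := hle hinst A hA v
  rw [Term.realize_subst, Term.realize_subst, ← hw, HomClass.realize_term,
    HomClass.realize_term] at h
  exact h

theorem iInter_inter_modClass_le_arity (hW : IsVariety L W) (hWV : W ⊆ V) :
    ⋂ n, V ∩ ModClass L {e | e.1 ≤ n ∧ ∀ A ∈ W, A.Sat e} = W := by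
  obtain ⟨EW, rfl⟩ := hW
  refine subset_antisymm (fun A hA e he => ?_) fun A hA => Set.mem_iInter.2 fun n => ?_
  · exact (Set.mem_iInter.1 hA e.1).2 e ⟨le_rfl, fun B hB => hB e he⟩
  · exact ⟨hWV hA, fun e he => he.2 A hA⟩

theorem exists_strictAnti_chain_of_not_boundedly_based (hV : IsVariety L V) (hW : IsVariety L W)
    (hWV : W ⊆ V)
    (h : ¬ ∃ (k : ℕ) (E : Set (Identity L)), (∀ e ∈ E, e.1 ≤ k) ∧ W = V ∩ ModClass L E) :
    ∃ C : ℕ → Set (Alg L),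
      (∀ i, IsVariety L (C i)) ∧ C 0 ⊆ V ∧ (∀ i, C (i + 1) ⊂ C i) ∧ W = ⋂ i, C i := by
  set D : ℕ → Set (Alg L) := fun n => V ∩ ModClass L {e | e.1 ≤ n ∧ ∀ A ∈ W, A.Sat e}
  have hD : Antitone D := fun m n hmn A hA =>
    ⟨hA.1, fun e he => hA.2 e ⟨he.1.trans hmn, he.2⟩⟩
  have hDW : ⋂ n, D n = W := iInter_inter_modClass_le_arity hW hWV
  obtain ⟨φ, hφ, hφW⟩ := hD.exists_strictAnti_comp_iInf_eq fun n hn =>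
    h ⟨n, _, fun e he => he.1, hDW.symm.trans hn.symm⟩
  exact ⟨D ∘ φ, fun i => hV.inter_modClass _, Set.inter_subset_left, hφ,
    hDW.symm.trans hφW.symm⟩

theorem exists_subset_modClass_of_iInter_subset (hV : IsVariety L V) (hLF : IsLocallyFinite L V)
    {Φ : Set (Identity L)} (hΦ : Φ.Finite) {C : ℕ → Set (Alg L)} (hC : ∀ i, IsVariety L (C i))
    (hC0 : C 0 ⊆ V) (hanti : Antitone C) (hCΦ : ⋂ i, C i ⊆ ModClass L Φ) :
    ∃ i, C i ⊆ ModClass L Φ := by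
  obtain ⟨n, hn⟩ := (hΦ.image Sigma.fst).bddAbove
  have hΦn : ∀ e ∈ Φ, e.1 ≤ n := fun e he => hn ⟨e, he, rfl⟩
  have hCV : ∀ j, C j ⊆ V := fun j => (hanti j.zero_le).trans hC0
  have := hV.finite_quotient_termSetoid hLF n
  -- the `n`-variable theories of the `C j` stabilise, so every `n`-generated member of `C i`
  -- lies in all `C j`
  obtain ⟨i, hi⟩ := Setoid.exists_forall_le_of_monotone (s := fun j => termSetoid (C j) n)
    (fun _ _ h => termSetoid_anti (hanti h) n) fun j => termSetoid_anti (hCV j) n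
  refine ⟨i, fun A hA e he => ?_⟩
  rw [← Alg.sat_widen_iff (hΦn e he)]
  refine Alg.sat_of_forall_closure_sat fun v => ?_
  have hB : (⟨Substructure.closure L (Set.range v)⟩ : Alg L) ∈ ⋂ j, C j :=
    Set.mem_iInter.2 fun j => (hC j).closure_mem_of_termSetoid_le hA (hi j) v
  exact (Alg.sat_widen_iff (hΦn e he)).2 (hCΦ hB e he)

end IsVariety

end

theorem no_descending_chain_iff_finitely_based_general
    (L : FirstOrder.Language)
    (V : Set (Alg L)) (hV : IsVariety L V) (hLF : IsLocallyFinite L V)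
    (W : Set (Alg L)) (hW : IsVariety L W) (hWV : W ⊆ V) :
    List.TFAE
      [ ¬ ∃ C : ℕ → Set (Alg L),
            (∀ i, IsVariety L (C i)) ∧ C 0 ⊆ V ∧ (∀ i, C (i + 1) ⊂ C i) ∧
            W = ⋂ i, C i,
        ∃ (k : ℕ) (E : Set (Identity L)),
            (∀ e ∈ E, e.1 ≤ k) ∧ W = V ∩ ModClass L E,
        ∃ Φ : Set (Identity L), Φ.Finite ∧ W = V ∩ ModClass L Φ ] := by
  tfae_have 1 → 2 := not_imp_comm.1 (hV.exists_strictAnti_chain_of_not_boundedly_based hW hWV)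
  tfae_have 2 → 3 := by
    rintro ⟨k, E, hE, rfl⟩
    have := hV.finite_quotient_termSetoid hLF k
    obtain ⟨Φ, -, hΦ, hΦE⟩ := exists_finite_subset_inter_modClass_eq (V := V) hE
    exact ⟨Φ, hΦ, hΦE.symm⟩
  tfae_have 3 → 1 := by
    rintro ⟨Φ, hΦ, rfl⟩ ⟨C, hC, hC0, hCC, hWC⟩
    have hanti : Antitone C := antitone_nat_of_succ_le fun i => (hCC i).subset
    obtain ⟨i, hi⟩ := hV.exists_subset_modClass_of_iInter_subset hLF hΦ hC hC0 hanti
      (hWC.symm.subset.trans Set.inter_subset_right)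
    have hCi : C i ⊆ V ∩ ModClass L Φ := Set.subset_inter ((hanti i.zero_le).trans hC0) hi
    exact (hCC i).not_subset (hCi.trans (hWC.subset.trans (Set.iInter_subset C (i + 1))))
  tfae_finish

/-- **Lemma (finitely based subvarieties via DCC).** Let `V` be a locally finite
variety and `W` a subvariety of `V`. Then the following are equivalent:
1. there is no infinite strictly descending chain `V ⊇ V₁ ⊃ V₂ ⊃ ⋯` of varieties
   with `W = ⋂ᵢ Vᵢ`;
2. there are `k : ℕ` and a set `Σ'` of identities, each in at most `k` variables,
   with `W = V ∩ Mod(Σ')`;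
3. there is a finite set `Φ` of identities with `W = V ∩ Mod(Φ)`. -/
theorem no_descending_chain_iff_finitely_based
    (L : FirstOrder.Language) [L.IsAlgebraic]
    (V : Set (Alg L)) (hV : IsVariety L V) (hLF : IsLocallyFinite L V)
    (W : Set (Alg L)) (hW : IsVariety L W) (hWV : W ⊆ V) :
    List.TFAE
      [ ¬ ∃ C : ℕ → Set (Alg L),
            (∀ i, IsVariety L (C i)) ∧ C 0 ⊆ V ∧ (∀ i, C (i + 1) ⊂ C i) ∧
            W = ⋂ i, C i,
        ∃ (k : ℕ) (E : Set (Identity L)),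
            (∀ e ∈ E, e.1 ≤ k) ∧ W = V ∩ ModClass L E,
        ∃ Φ : Set (Identity L), Φ.Finite ∧ W = V ∩ ModClass L Φ ] :=
  no_descending_chain_iff_finitely_based_general L V hV hLF W hW hWV
end

section
/- Let A be a finite algebra. Then there are only finitely many varieties W with W ≺ Var(A); in fact, the number of such subcovers is at most |Clo_k(A)|², where k is the number of generators of A and Clo_k(A) is the set of k-ary term functions of A. -/
open FirstOrder FirstOrder.Language

universe u v

/-!
A subcover `W` of `Var(A)` does not contain `A`, so some identity valid in `W` fails in `A`.
Substituting for its variables terms in the `k` generators that realise a failing assignment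
gives an identity `s ≈ t` in `k` variables that fails in `A` and holds in `W`. Then
`W ⊆ Var(A) ∩ Mod(s ≈ t) ⊂ Var(A)`, so `W = Var(A) ∩ Mod(s ≈ t)` by minimality, and inside
`Var(A)` this class depends only on the term functions `sᴬ, tᴬ ∈ Clo_k(A)`.
-/

open Function

namespace Alg

variable {L : FirstOrder.Language}

theorem mem_varGen_self (A : Alg L) : A ∈ varGen L {A} :=
  fun _ he => he A rfl

theorem sat_of_mem_varGen_singleton {A B : Alg L} (hB : B ∈ varGen L {A}) {e : Identity L}
    (he : A.Sat e) : B.Sat e :=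
  hB e fun _ hC => hC ▸ he

theorem exists_forall_term_realize_eq {A : Alg L} {k : ℕ} (hgen : KGen L k A)
    [Nonempty A.carrier] :
    ∃ g : Fin k → A.carrier, ∀ a, ∃ t : L.Term (Fin k), t.realize g = a := by
  obtain ⟨S, hSfin, hScard, hScl⟩ := hgen
  have := hSfin.fintype
  obtain ⟨f⟩ : Nonempty (S ↪ Fin k) := Function.Embedding.nonempty_of_card_le <| by
    rwa [Fintype.card_fin, ← Nat.card_eq_fintype_card, Nat.card_coe_set_eq]
  refine ⟨extend f Subtype.val fun _ => Classical.arbitrary _, fun a => ?_⟩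
  obtain ⟨t, rfl⟩ := Substructure.mem_closure_iff_exists_term.mp (hScl ▸ Substructure.mem_top a)
  refine ⟨t.relabel f, ?_⟩
  rw [Term.realize_relabel]
  congr 1
  funext s
  exact f.injective.extend_apply _ _ s

theorem exists_kary_instance_not_sat {A : Alg L} {k : ℕ} (hgen : KGen L k A) {e : Identity L}
    (he : ¬ A.Sat e) :
    ∃ s t : L.Term (Fin k), ¬ A.Sat ⟨k, (s, t)⟩ ∧ ∀ B : Alg L, B.Sat e → B.Sat ⟨k, (s, t)⟩ := by
  obtain ⟨v, hv⟩ : ∃ v : Fin e.1 → A.carrier, e.2.1.realize v ≠ e.2.2.realize v := by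
    simpa [Sat] using he
  have : Nonempty A.carrier := ⟨e.2.1.realize v⟩
  obtain ⟨g, hg⟩ := exists_forall_term_realize_eq hgen
  choose u hu using fun i => hg (v i)
  refine ⟨e.2.1.subst u, e.2.2.subst u, fun hA => hv ?_, fun B hB w => ?_⟩
  · simpa only [Term.realize_subst, hu] using hA g
  · simp only [Term.realize_subst]
    exact hB _

end Alg

section Varieties

variable {L : FirstOrder.Language}

theorem mem_modClass_singleton {B : Alg L} {e : Identity L} : B ∈ ModClass L {e} ↔ B.Sat e :=
  ⟨fun h => h e rfl, fun h _ he => he ▸ h⟩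

theorem IsVariety.inter {V W : Set (Alg L)} (hV : IsVariety L V) (hW : IsVariety L W) :
    IsVariety L (V ∩ W) := by
  obtain ⟨E, rfl⟩ := hV
  obtain ⟨F, rfl⟩ := hW
  refine ⟨E ∪ F, Set.ext fun B => ?_⟩
  simp only [ModClass, Set.mem_inter_iff, Set.mem_ofPred_eq, Set.mem_union, or_imp, forall_and]

theorem isVariety_varGen (K : Set (Alg L)) : IsVariety L (varGen L K) :=
  ⟨_, rfl⟩

theorem varGen_subset {K V : Set (Alg L)} (hV : IsVariety L V) (hK : K ⊆ V) :
    varGen L K ⊆ V := by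
  obtain ⟨E, rfl⟩ := hV
  exact fun B hB e he => hB e fun C hC => hK hC e he

theorem IsSubcover.eq_of_subset_of_ssubset {W V V' : Set (Alg L)} (h : IsSubcover L W V)
    (hV' : IsVariety L V') (hWV' : W ⊆ V') (hV'V : V' ⊂ V) : W = V' :=
  hWV'.eq_of_not_ssubset fun hlt => h.2 ⟨V', hV', hlt, hV'V⟩

theorem varGen_singleton_inter_modClass_congr {A : Alg L} {n : ℕ} {s₁ t₁ s₂ t₂ : L.Term (Fin n)}
    (hs : (fun v : Fin n → A.carrier => s₁.realize v) = fun v => s₂.realize v)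
    (ht : (fun v : Fin n → A.carrier => t₁.realize v) = fun v => t₂.realize v) :
    varGen L {A} ∩ ModClass L {⟨n, (s₁, t₁)⟩} = varGen L {A} ∩ ModClass L {⟨n, (s₂, t₂)⟩} := by
  ext B
  simp only [Set.mem_inter_iff, mem_modClass_singleton, and_congr_right_iff]
  intro hB
  have hs' := Alg.sat_of_mem_varGen_singleton hB (e := ⟨n, (s₁, s₂)⟩) (congrFun hs)
  have ht' := Alg.sat_of_mem_varGen_singleton hB (e := ⟨n, (t₁, t₂)⟩) (congrFun ht)
  exact forall_congr' fun v => by rw [hs' v, ht' v]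

theorem IsSubcover.exists_eq_varGen_singleton_inter_modClass {A : Alg L} {k : ℕ}
    (hgen : KGen L k A) {W : Set (Alg L)} (hW : IsVariety L W)
    (hsub : IsSubcover L W (varGen L {A})) :
    ∃ s t : L.Term (Fin k), W = varGen L {A} ∩ ModClass L {⟨k, (s, t)⟩} := by
  obtain ⟨E, rfl⟩ := hW
  have hA : A ∉ ModClass L E := fun hA =>
    hsub.1.2 (varGen_subset ⟨E, rfl⟩ (Set.singleton_subset_iff.mpr hA))
  obtain ⟨e, heE, heA⟩ : ∃ e ∈ E, ¬ A.Sat e := by simpa [ModClass] using hA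
  obtain ⟨s, t, hst, hcons⟩ := Alg.exists_kary_instance_not_sat hgen heA
  refine ⟨s, t, hsub.eq_of_subset_of_ssubset ((isVariety_varGen _).inter ⟨_, rfl⟩)
    (fun B hB => ⟨hsub.1.1 hB, mem_modClass_singleton.mpr (hcons B (hB e heE))⟩)
    ⟨Set.inter_subset_left, fun h => hst ?_⟩⟩
  exact mem_modClass_singleton.mp (h (Alg.mem_varGen_self A)).2

end Varieties

theorem finitely_many_subcovers_general
    (L : FirstOrder.Language) (A : Alg L) [Finite A.carrier]
    (k : ℕ) (hgen : KGen L k A) :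
    {W : Set (Alg L) | IsVariety L W ∧ IsSubcover L W (varGen L {A})}.Finite ∧
    Nat.card {W : Set (Alg L) // IsVariety L W ∧ IsSubcover L W (varGen L {A})} ≤
      (Nat.card {f : (Fin k → A.carrier) → A.carrier //
          ∃ s : L.Term (Fin k), f = fun v => s.realize v}) ^ 2 := by
  set Clo := {f : (Fin k → A.carrier) → A.carrier //
    ∃ s : L.Term (Fin k), f = fun v => s.realize v}
  set Subcovers := {W : Set (Alg L) // IsVariety L W ∧ IsSubcover L W (varGen L {A})}
  choose s t hst using fun W : Subcovers =>
    W.2.2.exists_eq_varGen_singleton_inter_modClass hgen W.2.1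
  let termFun (r : L.Term (Fin k)) : Clo := ⟨fun v => r.realize v, r, rfl⟩
  let Φ (W : Subcovers) : Clo × Clo := (termFun (s W), termFun (t W))
  have hΦ : Injective Φ := fun W₁ W₂ h => Subtype.ext <| by
    rw [hst W₁, hst W₂, varGen_singleton_inter_modClass_congr
      (congrArg (Subtype.val ∘ Prod.fst) h) (congrArg (Subtype.val ∘ Prod.snd) h)]
  have : Finite Subcovers := Finite.of_injective Φ hΦ
  refine ⟨Set.finite_coe_iff.mp this, ?_⟩
  calc Nat.card Subcovers ≤ Nat.card (Clo × Clo) := Nat.card_le_card_of_injective Φ hΦ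
    _ = Nat.card Clo ^ 2 := by rw [Nat.card_prod, sq]

/-- **Lemma (finitely many subcovers, part 1).** Let `A` be a finite algebra generated
by `k` elements. Then there are only finitely many varieties `W` with
`W ≺ Var(A)`; in fact the number of such subcovers is at most `|Clo_k(A)|²`,
where `Clo_k(A)` is the set of `k`-ary term functions of `A`. -/
theorem finitely_many_subcovers
    (L : FirstOrder.Language) [L.IsAlgebraic] (A : Alg L) [Finite A.carrier]
    (k : ℕ) (hgen : KGen L k A) :
    {W : Set (Alg L) | IsVariety L W ∧ IsSubcover L W (varGen L {A})}.Finite ∧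
    Nat.card {W : Set (Alg L) // IsVariety L W ∧ IsSubcover L W (varGen L {A})} ≤
      (Nat.card {f : (Fin k → A.carrier) → A.carrier //
          ∃ s : L.Term (Fin k), f = fun v => s.realize v}) ^ 2 :=
  finitely_many_subcovers_general L A k hgen
end
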